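/- Let N be a finite nonempty multiset of real numbers (agent positions) partitioned into a finite nonempty collection G of nonempty groups, and A a finite nonempty set of real numbers (alternative positions). Let L = min A and U = max A. Suppose r : G → {L, U} assigns to each group g an element of {L,U} maximizing the group welfare over {L,U}, i.e., for y ∈ {L,U}, Σ_{p∈g} |p − y| ≤ Σ_{p∈g} |p − r(g)|, and suppose w lies in the image of r and maximizes the total size of the groups it represents among the representatives. Then for every alternative o ∈ A, Σ_{p∈N} |p − o| ≤ 3 · Σ_{p∈N} |p − w|. -/

import Mathlib

/-!
The welfare `x ↦ ∑ p, |p - x|` is convex, so on `[L, U] ⊇ A` it is maximal at `L` or `U`, and it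
suffices to compare the extreme alternative `x` other than `w` with `w`. Groups represented by `w`
prefer `w` to `x`, and they hold at least as many agents as the groups represented by `x`. Moving
from `w` to `x` gains each agent at most `|w - x|`, while each group preferring `w` already has
welfare at least `card * |w - x| / 2` at `w`; hence the factor `1 + 2 = 3`.
-/

open Finset

theorem ConvexOn.multiset_sum_map {𝕜 E β ι : Type*} [Semiring 𝕜] [PartialOrder 𝕜]
    [AddCommMonoid E] [AddCommMonoid β] [PartialOrder β] [IsOrderedAddMonoid β] [SMul 𝕜 E]
    [Module 𝕜 β] {s : Set E} (hs : Convex 𝕜 s) (m : Multiset ι) {f : ι → E → β}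
    (hf : ∀ i ∈ m, ConvexOn 𝕜 s (f i)) : ConvexOn 𝕜 s fun x => (m.map fun i => f i x).sum := by
  induction m using Multiset.induction_on with
  | empty => simpa using convexOn_const 0 hs
  | cons i m ih =>
    simp only [Multiset.map_cons, Multiset.sum_cons]
    exact (hf i (Multiset.mem_cons_self i m)).add
      (ih fun j hj => hf j (Multiset.mem_cons_of_mem hj))

namespace Multiset

/-- The welfare of alternative `x` for agents at positions `m` (obnoxious voting: agents want to
be far from `x`). -/
def sumDist (m : Multiset ℝ) (x : ℝ) : ℝ := (m.map fun p => |p - x|).sum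

variable (m : Multiset ℝ)

theorem sumDist_nonneg (x : ℝ) : 0 ≤ m.sumDist x :=
  sum_nonneg fun _ hd => by
    obtain ⟨p, -, rfl⟩ := mem_map.mp hd
    exact abs_nonneg _

theorem sumDist_le_add_card_mul (x y : ℝ) :
    m.sumDist x ≤ m.sumDist y + card m * |y - x| := by
  calc m.sumDist x ≤ (m.map fun p => |p - y| + |y - x|).sum :=
        sum_map_le_sum_map _ _ fun p _ => abs_sub_le p y x
    _ = m.sumDist y + card m * |y - x| := by
        rw [sum_map_add, map_const', sum_replicate, nsmul_eq_mul]; rfl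

theorem card_mul_abs_sub_le_sumDist_add (x y : ℝ) :
    card m * |x - y| ≤ m.sumDist x + m.sumDist y := by
  calc (card m : ℝ) * |x - y| = (m.map fun _ => |x - y|).sum := by
        rw [map_const', sum_replicate, nsmul_eq_mul]
    _ ≤ (m.map fun p => |p - x| + |p - y|).sum :=
        sum_map_le_sum_map _ _ fun p _ => by simpa only [abs_sub_comm x p] using abs_sub_le x p y
    _ = m.sumDist x + m.sumDist y := sum_map_add

theorem convexOn_sumDist : ConvexOn ℝ Set.univ m.sumDist :=
  ConvexOn.multiset_sum_map convex_univ m fun p _ => by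
    simpa only [Real.dist_eq, abs_sub_comm] using convexOn_univ_dist p

end Multiset

section Majority

variable {κ : Type*} (G : Finset κ) (grp : κ → Multiset ℝ)

theorem convexOn_sum_sumDist : ConvexOn ℝ Set.univ fun x => ∑ g ∈ G, (grp g).sumDist x :=
  ConvexOn.multiset_sum_map convex_univ G.val fun g _ => (grp g).convexOn_sumDist

theorem sum_sumDist_le_three_mul_of_majority (p : κ → Prop) [DecidablePred p] {w x : ℝ}
    (hopt : ∀ g ∈ G, p g → (grp g).sumDist x ≤ (grp g).sumDist w)
    (hcard : ∑ g ∈ G.filter (¬ p ·), Multiset.card (grp g) ≤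
      ∑ g ∈ G.filter p, Multiset.card (grp g)) :
    ∑ g ∈ G, (grp g).sumDist x ≤ 3 * ∑ g ∈ G, (grp g).sumDist w := by
  set S := G.filter p
  set T := G.filter (¬ p ·)
  have hS : ∑ g ∈ S, (grp g).sumDist x ≤ ∑ g ∈ S, (grp g).sumDist w :=
    sum_le_sum fun g hg => hopt g (mem_filter.mp hg).1 (mem_filter.mp hg).2
  have hSd : (∑ g ∈ S, Multiset.card (grp g) : ℝ) * |w - x| ≤ 2 * ∑ g ∈ S, (grp g).sumDist w := by
    rw [sum_mul, mul_sum]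
    refine sum_le_sum fun g hg => ?_
    have := (grp g).card_mul_abs_sub_le_sumDist_add w x
    linarith [hopt g (mem_filter.mp hg).1 (mem_filter.mp hg).2]
  have hT : ∑ g ∈ T, (grp g).sumDist x ≤
      ∑ g ∈ T, (grp g).sumDist w + (∑ g ∈ T, Multiset.card (grp g) : ℝ) * |w - x| := by
    rw [sum_mul, ← sum_add_distrib]
    exact sum_le_sum fun g _ => (grp g).sumDist_le_add_card_mul x w
  have hTd : (∑ g ∈ T, Multiset.card (grp g) : ℝ) * |w - x| ≤
      (∑ g ∈ S, Multiset.card (grp g) : ℝ) * |w - x| :=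
    mul_le_mul_of_nonneg_right (by exact_mod_cast hcard) (abs_nonneg _)
  have hTw : 0 ≤ ∑ g ∈ T, (grp g).sumDist w := sum_nonneg fun g _ => (grp g).sumDist_nonneg w
  rw [← sum_filter_add_sum_filter_not G p, ← sum_filter_add_sum_filter_not G p]
  linarith

end Majority

theorem sum_filter_ne_le_sum_filter_eq {κ α : Type*} [DecidableEq α] (G : Finset κ) (c : κ → ℕ)
    (r : κ → α) {w x : α} (hr : ∀ g ∈ G, r g = w ∨ r g = x)
    (hmax : (∃ g ∈ G, r g = x) → ∑ g ∈ G.filter (r · = x), c g ≤ ∑ g ∈ G.filter (r · = w), c g) :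
    ∑ g ∈ G.filter (¬ r · = w), c g ≤ ∑ g ∈ G.filter (r · = w), c g := by
  by_cases hx : ∃ g ∈ G, r g = x
  · refine le_trans (sum_le_sum_of_subset fun g hg => ?_) (hmax hx)
    obtain ⟨hgG, hgw⟩ := mem_filter.mp hg
    exact mem_filter.mpr ⟨hgG, (hr g hgG).resolve_left hgw⟩
  · rw [sum_eq_zero fun g hg => ?_]
    · exact Nat.zero_le _
    obtain ⟨hgG, hgw⟩ := mem_filter.mp hg
    exact absurd ⟨g, hgG, (hr g hgG).resolve_left hgw⟩ hx

theorem maxWeightOfOptimal_line_distortion_three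
    {κ : Type*}
    (G : Finset κ)
    (grp : κ → Multiset ℝ)
    (A : Finset ℝ) (hA : A.Nonempty)
    (L U : ℝ) (hL : L = A.min' hA) (hU : U = A.max' hA)
    (r : κ → ℝ) (hrLU : ∀ g ∈ G, r g = L ∨ r g = U)
    (hropt : ∀ g ∈ G, ∀ y : ℝ, y = L ∨ y = U →
      ((grp g).map (fun p => |p - y|)).sum ≤ ((grp g).map (fun p => |p - r g|)).sum)
    (w : ℝ) (hw : ∃ g ∈ G, r g = w)
    (hwmax : ∀ x : ℝ, (∃ g ∈ G, r g = x) →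
      ∑ g ∈ G.filter (fun g => r g = x), Multiset.card (grp g) ≤
        ∑ g ∈ G.filter (fun g => r g = w), Multiset.card (grp g))
    (o : ℝ) (ho : o ∈ A) :
    ∑ g ∈ G, ((grp g).map (fun p => |p - o|)).sum ≤
      3 * ∑ g ∈ G, ((grp g).map (fun p => |p - w|)).sum := by
  obtain ⟨x, hx⟩ : ∃ x, ∀ g ∈ G, r g = w ∨ r g = x := by
    obtain ⟨g₀, hg₀, rfl⟩ := hw
    rcases hrLU g₀ hg₀ with h | h <;> rw [h]
    · exact ⟨U, hrLU⟩
    · exact ⟨L, fun g hg => (hrLU g hg).symm⟩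
  have hweight := sum_filter_ne_le_sum_filter_eq G (fun g => Multiset.card (grp g)) r hx (hwmax x)
  have hext : ∀ y, y = L ∨ y = U →
      ∑ g ∈ G, (grp g).sumDist y ≤ 3 * ∑ g ∈ G, (grp g).sumDist w := fun y hy =>
    sum_sumDist_le_three_mul_of_majority G grp (r · = w)
      (fun g hg hgw => by rw [← hgw]; exact hropt g hg y hy) hweight
  have hoLU : o ∈ Set.Icc L U := by
    rw [hL, hU]
    exact ⟨A.min'_le o ho, A.le_max' o ho⟩
  calc ∑ g ∈ G, (grp g).sumDist o
      ≤ max (∑ g ∈ G, (grp g).sumDist L) (∑ g ∈ G, (grp g).sumDist U) :=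
        (convexOn_sum_sumDist G grp).le_max_of_mem_Icc trivial trivial hoLU
    _ ≤ 3 * ∑ g ∈ G, (grp g).sumDist w := max_le (hext L (.inl rfl)) (hext U (.inr rfl))
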